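/- Let Λ be a nonempty finite index set and (G_λ)_{λ∈Λ} a family of groups, and let G = ∏_{λ∈Λ} G_λ be their direct product. Then e(G) = ∏_{λ∈Λ} e(G_λ), i.e., the intersection of all essential subgroups of G equals the direct product of the subgroups e(G_λ). -/

import Mathlib

/-- A subgroup `E` of `G` is *essential* if it is normal and meets every
nontrivial normal subgroup of `G` nontrivially. -/
def IsEssential {G : Type*} [Group G] (E : Subgroup G) : Prop :=
  E.Normal ∧ ∀ N : Subgroup G, N.Normal → N ≠ ⊥ → E ⊓ N ≠ ⊥

/-- `essCore G` (denoted `e(G)`) is the intersection of all essential subgroups of `G`. -/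
def essCore (G : Type*) [Group G] : Subgroup G :=
  sInf {E : Subgroup G | IsEssential E}

/-!
Both inclusions come from transporting essential subgroups along homomorphisms. Pulling back
an essential subgroup along the surjection `∏ G_λ → G_λ` gives an essential subgroup of the
product (a normal subgroup of the product either lies in the kernel or maps to a nontrivial normal
subgroup of `G_λ`), so `e(G)` lies in `∏ e(G_λ)`. Pulling back an essential subgroup of the
product along the embedding `G_λ → ∏ G_λ` gives an essential subgroup of `G_λ`, since that
embedding sends normal subgroups to normal subgroups; so each `e(G_λ)` lies in `e(G)`, and for a
finite family the coordinate subgroups generate `∏ e(G_λ)`.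
-/

namespace Subgroup

variable {G H : Type*} [Group G] [Group H]

lemma map_comap_inf (f : G →* H) (E : Subgroup H) (N : Subgroup G) :
    (E.comap f ⊓ N).map f = E ⊓ N.map f :=
  SetLike.coe_injective (Set.image_preimage_inter f N E)

lemma comap_inf_ne_bot_of_inf_map_ne_bot {f : G →* H} {E : Subgroup H} {N : Subgroup G}
    (h : E ⊓ N.map f ≠ ⊥) : E.comap f ⊓ N ≠ ⊥ := by
  intro hbot
  rw [← map_comap_inf, hbot, map_bot] at h
  exact h rfl

lemma Normal.map_mulSingle {ι : Type*} [DecidableEq ι] {G : ι → Type*} [∀ i, Group (G i)]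
    {i : ι} {N : Subgroup (G i)} (hN : N.Normal) : (N.map (MonoidHom.mulSingle G i)).Normal where
  conj_mem := by
    rintro _ ⟨n, hn, rfl⟩ p
    refine ⟨p i * n * (p i)⁻¹, hN.conj_mem n hn (p i), funext fun j => ?_⟩
    obtain rfl | hj := eq_or_ne j i
    · simp
    · simp [hj]

end Subgroup

namespace IsEssential

variable {G H : Type*} [Group G] [Group H] {E : Subgroup H}

lemma comap_of_surjective (hE : IsEssential E) {f : G →* H} (hf : Function.Surjective f) :
    IsEssential (E.comap f) := by
  refine ⟨hE.1.comap f, fun N hN hN_ne => ?_⟩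
  by_cases hker : N ≤ f.ker
  · rwa [inf_eq_right.mpr (hker.trans (f.ker_le_comap E))]
  · exact Subgroup.comap_inf_ne_bot_of_inf_map_ne_bot <|
      hE.2 _ (hN.map f hf) (mt (Subgroup.map_eq_bot_iff N).mp hker)

lemma comap_of_injective (hE : IsEssential E) {f : G →* H} (hf : Function.Injective f)
    (hnormal : ∀ N : Subgroup G, N.Normal → (N.map f).Normal) :
    IsEssential (E.comap f) :=
  ⟨hE.1.comap f, fun N hN hN_ne => Subgroup.comap_inf_ne_bot_of_inf_map_ne_bot <|
    hE.2 _ (hnormal N hN) (mt (Subgroup.map_eq_bot_iff_of_injective N hf).mp hN_ne)⟩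

end IsEssential

lemma essCore_le_comap {G H : Type*} [Group G] [Group H] {f : G →* H}
    (hf : ∀ E : Subgroup H, IsEssential E → IsEssential (E.comap f)) :
    essCore G ≤ (essCore H).comap f := fun _ hg =>
  Subgroup.mem_sInf.mpr fun E hE => Subgroup.mem_sInf.mp hg _ (hf E hE)

theorem stmt6_general {ι : Type*} [Finite ι] (G : ι → Type*) [∀ i, Group (G i)] :
    essCore (∀ i, G i) = Subgroup.pi Set.univ (fun i => essCore (G i)) := by
  classical
  apply le_antisymm
  · intro g hg i _
    have hsurj : Function.Surjective (Pi.evalMonoidHom G i) := fun x =>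
      ⟨Pi.mulSingle i x, Pi.mulSingle_eq_same i x⟩
    exact essCore_le_comap (fun E hE => hE.comap_of_surjective hsurj) hg
  · intro g hg
    refine Subgroup.pi_mem_of_mulSingle_mem g fun i => ?_
    have hcomap : essCore (G i) ≤ (essCore (∀ i, G i)).comap (MonoidHom.mulSingle G i) :=
      essCore_le_comap fun E hE =>
        hE.comap_of_injective (Pi.mulSingle_injective i) fun _ hN => hN.map_mulSingle
    exact hcomap (hg i trivial)

/-- For a nonempty finite family of groups, `e(∏ G_λ) = ∏ e(G_λ)`. -/
theorem stmt6 {ι : Type*} [Finite ι] [Nonempty ι] (G : ι → Type*) [∀ i, Group (G i)] :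
    essCore (∀ i, G i) = Subgroup.pi Set.univ (fun i => essCore (G i)) :=
  stmt6_general G
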